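/- Let G be a finite simple graph on n ≥ 1 vertices with maximum degree Δ, and suppose D* is a nonempty dominating set of G of minimum cardinality γ. Let v₁, …, v_k be a sequence of vertices built greedily: setting U₀ = V and U_i = U_{i−1} \ N[v_i], each v_i maximizes |N[v] ∩ U_{i−1}| over all vertices v of G, each |N[v_i] ∩ U_{i−1}| ≥ 1, and U_k = ∅. Then k ≤ γ · (1 + ln(Δ + 1)). -/

import Mathlib

/-!
Let `D` be any dominating set and `γ = |D|`. While a set `U` of vertices is uncovered, the
closed neighbourhoods of `D` cover `U`, so some vertex sees at least `|U| / γ` of them and the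
greedy choice removes at least that many: `|U|` shrinks by a factor `1 - 1/γ ≤ exp (-1/γ)` per
step, starting from `|V| ≤ γ (Δ + 1)`. Since every step removes a vertex, `γ` vertices are still
uncovered `γ` steps before the end; comparing the two bounds at that time `i = k - γ` gives
`exp (i / γ) ≤ Δ + 1`.
-/

/-- A dominating set of a simple graph: every vertex is in `S` or adjacent to a vertex of `S`. -/
def SimpleGraph.IsDominatingSet {V : Type*} (G : SimpleGraph V) (S : Finset V) : Prop :=
  ∀ v : V, v ∈ S ∨ ∃ u ∈ S, G.Adj u v

open Finset Real

theorem le_exp_neg_inv_mul_of_mul_add_le {γ a b : ℝ} (hγ : 0 < γ) (hb : 0 ≤ b)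
    (h : γ * a + b ≤ γ * b) : a ≤ exp (-γ⁻¹) * b := by
  have ha : a ≤ (1 - γ⁻¹) * b := by
    rw [sub_mul, one_mul, le_sub_iff_add_le, ← mul_le_mul_iff_of_pos_left hγ, mul_add,
      ← mul_assoc, mul_inv_cancel₀ hγ.ne', one_mul]
    exact h
  have hexp : 1 - γ⁻¹ ≤ exp (-γ⁻¹) := by linarith [add_one_le_exp (-γ⁻¹)]
  exact ha.trans (mul_le_mul_of_nonneg_right hexp hb)

theorem le_exp_neg_div_mul_of_decay {γ k : ℕ} (hγ : 0 < γ) {u : ℕ → ℕ}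
    (hdecay : ∀ i < k, γ * u (i + 1) + u i ≤ γ * u i) {i : ℕ} (hi : i ≤ k) :
    (u i : ℝ) ≤ exp (-(i / γ)) * u 0 := by
  induction i with
  | zero => simp
  | succ i ih =>
    have hstep : (u (i + 1) : ℝ) ≤ exp (-(γ : ℝ)⁻¹) * u i :=
      le_exp_neg_inv_mul_of_mul_add_le (by exact_mod_cast hγ) (Nat.cast_nonneg _)
        (by exact_mod_cast hdecay i hi)
    calc (u (i + 1) : ℝ) ≤ exp (-(γ : ℝ)⁻¹) * (exp (-(i / γ)) * u 0) :=
          hstep.trans (mul_le_mul_of_nonneg_left (ih (by omega)) (exp_pos _).le)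
      _ = exp (-((i + 1 : ℕ) / γ)) * u 0 := by
          rw [← mul_assoc, ← exp_add]
          push_cast
          ring_nf

/- `γ * u (i + 1) + u i ≤ γ * u i` is `u (i + 1) ≤ (1 - 1/γ) u i` without division; for `γ = 0`
it forces `u i = 0`. -/
theorem le_mul_one_add_log_of_decay {γ k : ℕ} {c : ℝ} (hc : 1 ≤ c) {u : ℕ → ℕ}
    (h0 : (u 0 : ℝ) ≤ γ * c) (hdecay : ∀ i < k, γ * u (i + 1) + u i ≤ γ * u i)
    (hlarge : ∀ i ≤ k, k ≤ i + u i) :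
    (k : ℝ) ≤ γ * (1 + log c) := by
  have hlog : 0 ≤ log c := log_nonneg hc
  rcases le_or_gt k γ with hkγ | hγk
  · calc (k : ℝ) ≤ γ := by exact_mod_cast hkγ
      _ ≤ γ * (1 + log c) := le_mul_of_one_le_right (Nat.cast_nonneg _) (by linarith)
  have hγ : 0 < γ := by
    refine Nat.pos_of_ne_zero fun hγ0 => ?_
    have hu0 : u 0 = 0 := by
      exact_mod_cast le_antisymm (by simpa [hγ0] using h0) (Nat.cast_nonneg (u 0))
    have := hlarge 0 k.zero_le
    omega
  have hγR : (0 : ℝ) < γ := by exact_mod_cast hγ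
  obtain ⟨i, rfl⟩ : ∃ i, k = i + γ := ⟨k - γ, by omega⟩
  have huγ : γ ≤ u i := by
    have := hlarge i (by omega)
    omega
  have hγ_le : (γ : ℝ) ≤ exp (-(i / γ)) * (γ * c) :=
    calc (γ : ℝ) ≤ u i := by exact_mod_cast huγ
      _ ≤ exp (-(i / γ)) * u 0 := le_exp_neg_div_mul_of_decay hγ hdecay (by omega)
      _ ≤ exp (-(i / γ)) * (γ * c) := mul_le_mul_of_nonneg_left h0 (exp_pos _).le
  have hexp : exp (i / γ) ≤ c := by
    rw [exp_neg, le_inv_mul_iff₀ (exp_pos _), mul_comm] at hγ_le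
    exact le_of_mul_le_mul_left hγ_le hγR
  have hiγ : (i : ℝ) ≤ γ * log c := by
    rw [← div_le_iff₀' hγR]
    exact (le_log_iff_exp_le (by linarith)).mpr hexp
  push_cast
  linarith

theorem le_add_apply_of_forall_succ_lt {u : ℕ → ℕ} {k : ℕ} (hu : ∀ i < k, u (i + 1) < u i)
    {i : ℕ} (hi : i ≤ k) : k ≤ i + u i := by
  induction hi using Nat.decreasingInduction with
  | self => omega
  | of_succ j hj ih =>
    have := hu j hj
    omega

namespace SimpleGraph

variable {V : Type*} [Fintype V] [DecidableEq V] (G : SimpleGraph V) [DecidableRel G.Adj]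

def closedNeighborFinset (v : V) : Finset V := insert v (G.neighborFinset v)

theorem card_closedNeighborFinset (v : V) : #(G.closedNeighborFinset v) = G.degree v + 1 :=
  card_insert_of_notMem (G.notMem_neighborFinset_self v)

variable {G}

theorem IsDominatingSet.card_le_sum_card_inter {D : Finset V} (hD : G.IsDominatingSet D)
    (A : Finset V) : #A ≤ ∑ u ∈ D, #(G.closedNeighborFinset u ∩ A) := by
  refine (card_le_card fun x hx => ?_).trans card_biUnion_le
  rcases hD x with hxD | ⟨u, hu, hadj⟩
  · exact mem_biUnion.2 ⟨x, hxD, mem_inter.2 ⟨mem_insert_self _ _, hx⟩⟩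
  · have hxu : x ∈ G.closedNeighborFinset u :=
      mem_insert_of_mem ((G.mem_neighborFinset u x).2 hadj)
    exact mem_biUnion.2 ⟨u, hu, mem_inter.2 ⟨hxu, hx⟩⟩

theorem IsDominatingSet.card_le_card_mul_of_forall_card_inter_le {D A : Finset V}
    (hD : G.IsDominatingSet D) {m : ℕ} (hm : ∀ u, #(G.closedNeighborFinset u ∩ A) ≤ m) :
    #A ≤ #D * m :=
  (hD.card_le_sum_card_inter A).trans (sum_le_card_nsmul _ _ _ fun u _ => hm u)

theorem IsDominatingSet.card_le_mul_add_one {D : Finset V} (hD : G.IsDominatingSet D) {Δ : ℕ}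
    (hΔ : ∀ w, G.degree w ≤ Δ) : Fintype.card V ≤ #D * (Δ + 1) :=
  hD.card_le_card_mul_of_forall_card_inter_le fun u => calc
    #(G.closedNeighborFinset u ∩ univ) ≤ #(G.closedNeighborFinset u) :=
      card_le_card inter_subset_left
    _ = G.degree u + 1 := G.card_closedNeighborFinset u
    _ ≤ Δ + 1 := Nat.add_le_add_right (hΔ u) 1

theorem IsDominatingSet.mul_card_sdiff_add_card_le {D A : Finset V} (hD : G.IsDominatingSet D)
    {w : V} (hw : ∀ u, #(G.closedNeighborFinset u ∩ A) ≤ #(G.closedNeighborFinset w ∩ A)) :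
    #D * #(A \ G.closedNeighborFinset w) + #A ≤ #D * #A := by
  have hA := hD.card_le_card_mul_of_forall_card_inter_le hw
  rw [inter_comm] at hA
  calc #D * #(A \ G.closedNeighborFinset w) + #A
      ≤ #D * #(A \ G.closedNeighborFinset w) + #D * #(A ∩ G.closedNeighborFinset w) := by gcongr
    _ = #D * #A := by rw [← mul_add, card_sdiff_add_card_inter]

end SimpleGraph

theorem greedy_approx_dominatingSet_general
    {V : Type*} [Fintype V] [DecidableEq V] (G : SimpleGraph V) [DecidableRel G.Adj]
    (Δ : ℕ) (hΔ : ∀ w : V, G.degree w ≤ Δ)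
    (Dstar : Finset V) (hdom : G.IsDominatingSet Dstar)
    (k : ℕ) (v : ℕ → V) (U : ℕ → Finset V)
    (hU0 : U 0 = Finset.univ)
    (hUsucc : ∀ i < k, U (i + 1) = U i \ (insert (v i) (G.neighborFinset (v i))))
    (hmax : ∀ i < k, ∀ w : V, ((insert w (G.neighborFinset w)) ∩ U i).card ≤
      ((insert (v i) (G.neighborFinset (v i))) ∩ U i).card)
    (hpos : ∀ i < k, 1 ≤ ((insert (v i) (G.neighborFinset (v i))) ∩ U i).card) :
    (k : ℝ) ≤ (Dstar.card : ℝ) * (1 + Real.log ((Δ : ℝ) + 1)) := by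
  have hstep : ∀ i < k, U (i + 1) = U i \ G.closedNeighborFinset (v i) := hUsucc
  have hspan : ∀ i < k, 1 ≤ #(G.closedNeighborFinset (v i) ∩ U i) := hpos
  have hcard0 : (#(U 0) : ℝ) ≤ #Dstar * ((Δ : ℝ) + 1) := by
    rw [hU0, card_univ]
    exact_mod_cast hdom.card_le_mul_add_one hΔ
  have hdecay (i : ℕ) (hi : i < k) : #Dstar * #(U (i + 1)) + #(U i) ≤ #Dstar * #(U i) := by
    rw [hstep i hi]
    exact hdom.mul_card_sdiff_add_card_le (hmax i hi)
  have hshrink (i : ℕ) (hi : i < k) : #(U (i + 1)) < #(U i) := by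
    have hsplit := card_sdiff_add_card_inter (U i) (G.closedNeighborFinset (v i))
    rw [inter_comm] at hsplit
    have := hspan i hi
    rw [hstep i hi]
    omega
  exact le_mul_one_add_log_of_decay (le_add_of_nonneg_left Δ.cast_nonneg) hcard0 hdecay
    fun i hi => le_add_apply_of_forall_succ_lt (u := fun i => #(U i)) hshrink hi

/-- The greedy algorithm computes a `(1 + ln(Δ+1))`-approximation of the
minimum dominating set. -/
theorem greedy_approx_dominatingSet
    {V : Type*} [Fintype V] [DecidableEq V] (G : SimpleGraph V) [DecidableRel G.Adj]
    (hn : 1 ≤ Fintype.card V)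
    (Δ : ℕ) (hΔ : ∀ w : V, G.degree w ≤ Δ)
    (Dstar : Finset V) (hdom : G.IsDominatingSet Dstar) (hne : Dstar.Nonempty)
    (hmin : ∀ D' : Finset V, G.IsDominatingSet D' → Dstar.card ≤ D'.card)
    (k : ℕ) (v : ℕ → V) (U : ℕ → Finset V)
    (hU0 : U 0 = Finset.univ)
    (hUsucc : ∀ i < k, U (i + 1) = U i \ (insert (v i) (G.neighborFinset (v i))))
    (hmax : ∀ i < k, ∀ w : V, ((insert w (G.neighborFinset w)) ∩ U i).card ≤
      ((insert (v i) (G.neighborFinset (v i))) ∩ U i).card)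
    (hpos : ∀ i < k, 1 ≤ ((insert (v i) (G.neighborFinset (v i))) ∩ U i).card)
    (hUk : U k = ∅) :
    (k : ℝ) ≤ (Dstar.card : ℝ) * (1 + Real.log ((Δ : ℝ) + 1)) :=
  greedy_approx_dominatingSet_general G Δ hΔ Dstar hdom k v U hU0 hUsucc hmax hpos
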